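/- The set M_{1,1} ∩ M_1^s, i.e. the set of martingales f ∈ M_{1,1} with f_n → 0 P-almost surely, is comeager in M_{1,1}. -/

import Mathlib

open MeasureTheory Filter Set
open scoped ENNReal Topology

noncomputable section

namespace MartingalePaper

variable {Ω : Type}

/-- The discrete topology on `Set Ω`; each finite partition `D n` thus carries the
discrete topology, and `ℕ → Set Ω` the product topology. -/
instance : TopologicalSpace (Set Ω) := ⊥

/-- `(D n)` is a sequence of finite measurable partitions of `Ω`, each refined by the next. -/
def IsPartitionSeq [MeasurableSpace Ω] (D : ℕ → Finset (Set Ω)) : Prop :=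
  (∀ n, ∀ A ∈ D n, MeasurableSet A) ∧
  (∀ n, ∀ A ∈ D n, A.Nonempty) ∧
  (∀ n, (D n : Set (Set Ω)).PairwiseDisjoint id) ∧
  (∀ n, ⋃ A ∈ D n, A = (Set.univ : Set Ω)) ∧
  (∀ n, ∀ A ∈ D (n + 1), ∃ B ∈ D n, A ⊆ B)

/-- Standing Assumptions (A). -/
def AssumptionA [MeasurableSpace Ω] (P : Measure Ω) (D : ℕ → Finset (Set Ω)) : Prop :=
  (∀ n, ∀ A ∈ D n, 0 < P A) ∧ (∀ n, ∀ A ∈ D n, ∃ m, n < m ∧ A ∉ D m)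

/-- The compact metrizable space `K` associated to the filtration: decreasing chains of atoms. -/
abbrev Kt (D : ℕ → Finset (Set Ω)) : Type _ :=
  {x : ℕ → Set Ω // (∀ n, x n ∈ D n) ∧ ∀ n m : ℕ, n ≤ m → x m ⊆ x n}

/-- The function on `Ω` determined by the values `f n A` on the atoms `A ∈ D n`. -/
def mval (D : ℕ → Finset (Set Ω)) (f : ℕ → Set Ω → ℝ) (n : ℕ) (w : Ω) : ℝ :=
  ∑ A ∈ D n, A.indicator (fun _ => f n A) w

/-- A martingale adapted to the filtration `(σ(D n))`, in its canonical representation by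
the (a.e. constant) values on the atoms:  `f n A` is the value of the `n`-th function on
the atom `A ∈ D n`. -/
def IsMart [MeasurableSpace Ω] (P : Measure Ω) (D : ℕ → Finset (Set Ω))
    (f : ℕ → Set Ω → ℝ) : Prop :=
  (∀ n, ∀ A : Set Ω, A ∉ D n → f n A = 0) ∧
  ∀ n m : ℕ, n ≤ m → ∀ A ∈ D n,
    ∫ w in A, mval D f n w ∂P = ∫ w in A, mval D f m w ∂P

/-- `‖f_n‖_{L^p}`. -/
def lpNorm [MeasurableSpace Ω] (P : Measure Ω) (D : ℕ → Finset (Set Ω)) (p : ℝ≥0∞)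
    (f : ℕ → Set Ω → ℝ) (n : ℕ) : ℝ≥0∞ :=
  eLpNorm (mval D f n) p P

/-- `‖f‖_p = sup_n ‖f_n‖_{L^p}`. -/
def martNorm [MeasurableSpace Ω] (P : Measure Ω) (D : ℕ → Finset (Set Ω)) (p : ℝ≥0∞)
    (f : ℕ → Set Ω → ℝ) : ℝ≥0∞ :=
  ⨆ n, lpNorm P D p f n

/-- `M_p`, the space of `L^p`-bounded martingales adapted to the filtration. -/
def Mart [MeasurableSpace Ω] (P : Measure Ω) (D : ℕ → Finset (Set Ω)) (p : ℝ≥0∞) : Type _ :=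
  {f : ℕ → Set Ω → ℝ // IsMart P D f ∧ martNorm P D p f ≠ ∞}

/-- The norm topology on `M_p`: the topology generated by the balls of the norm `‖·‖_p`
(which is exactly the topology of this metric). -/
instance [MeasurableSpace Ω] (P : Measure Ω) (D : ℕ → Finset (Set Ω)) (p : ℝ≥0∞) :
    TopologicalSpace (Mart P D p) :=
  TopologicalSpace.generateFrom
    {s | ∃ (f : Mart P D p) (ε : ℝ≥0∞), 0 < ε ∧
      s = {g : Mart P D p | martNorm P D p (fun k A => g.1 k A - f.1 k A) < ε}}

/-- `limsup f_n(x) = +∞` and `liminf f_n(x) = -∞`. -/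
def DivergesAt (D : ℕ → Finset (Set Ω)) (f : ℕ → Set Ω → ℝ) (x : Kt D) : Prop :=
  Filter.limsup (fun n => ((f n (x.1 n) : ℝ) : EReal)) Filter.atTop = ⊤ ∧
  Filter.liminf (fun n => ((f n (x.1 n) : ℝ) : EReal)) Filter.atTop = ⊥

/-- `M_{p,1}`, the martingales of `‖·‖_p`-norm at most one. -/
def MartBall [MeasurableSpace Ω] (P : Measure Ω) (D : ℕ → Finset (Set Ω)) (p : ℝ≥0∞) :
    Type _ :=
  {f : ℕ → Set Ω → ℝ // IsMart P D f ∧ martNorm P D p f ≤ 1}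

/-- The topology of pointwise convergence on `M_{p,1}`, inherited from the product
`∏ₙ L^p(Σ_n)` with coordinatewise norm topologies: it is generated by the subbasic sets
given by a coordinate `n` and an `L^p`-ball in that coordinate. -/
instance [MeasurableSpace Ω] (P : Measure Ω) (D : ℕ → Finset (Set Ω)) (p : ℝ≥0∞) :
    TopologicalSpace (MartBall P D p) :=
  TopologicalSpace.generateFrom
    {s | ∃ (f : MartBall P D p) (n : ℕ) (ε : ℝ≥0∞), 0 < ε ∧
      s = {g : MartBall P D p | lpNorm P D p (fun k A => g.1 k A - f.1 k A) n < ε}}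

/-- The martingale `f` converges to `0` `P`-almost surely. -/
def AETendsto0 [MeasurableSpace Ω] (P : Measure Ω) (D : ℕ → Finset (Set Ω))
    (f : ℕ → Set Ω → ℝ) : Prop :=
  ∀ᵐ w ∂P, Filter.Tendsto (fun n => mval D f n w) Filter.atTop (nhds 0)

/-!
For `k : ℕ` and `ε > 0` let `U(k, ε)` (`smallAfter P D k ε`) be the set of martingales `h` with
`P {|h_m| ≥ ε} < ε` for some `m ≥ k`. It is open, because this is a condition on the finitely many
values of the single coordinate `h_m`. It is dense: a martingale `g` may be kept up to any level
`N` and continued by moving the mass `g_N(A) P(A)` of every atom `A ∈ D N` onto a decreasing chain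
of atoms inside `A`; this is again a martingale, of no larger norm. If the chain always moves to a
child of least measure, it loses at least half its measure whenever its atom splits, which by
Assumption (A) happens infinitely often; so its measure tends to `0`. Finally, a martingale in
every `U(k, 1/(k+1))` tends to `0` in measure along a subsequence, while by Doob's theorem it
converges almost surely; hence its almost sure limit is `0`.
-/

section Atoms

variable {D : ℕ → Finset (Set Ω)}

/-- The σ-algebra `Σ_n`. -/
abbrev atomSigma (D : ℕ → Finset (Set Ω)) (n : ℕ) : MeasurableSpace Ω :=
  MeasurableSpace.generateFrom (D n : Set (Set Ω))

theorem mval_congr {f g : ℕ → Set Ω → ℝ} {n : ℕ} (h : f n = g n) :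
    mval D f n = mval D g n := by
  unfold mval
  rw [h]

theorem stronglyMeasurable_mval (f : ℕ → Set Ω → ℝ) (n : ℕ) :
    StronglyMeasurable[atomSigma D n] (mval D f n) :=
  Finset.stronglyMeasurable_fun_sum _ fun _ hA =>
    stronglyMeasurable_const.indicator (MeasurableSpace.measurableSet_generateFrom hA)

def splice (f g : ℕ → Set Ω → ℝ) (N : ℕ) : ℕ → Set Ω → ℝ :=
  fun n => if n ≤ N then f n else g n

theorem splice_of_le {f g : ℕ → Set Ω → ℝ} {N n : ℕ} (h : n ≤ N) : splice f g N n = f n :=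
  if_pos h

theorem splice_of_lt {f g : ℕ → Set Ω → ℝ} {N n : ℕ} (h : N < n) : splice f g N n = g n :=
  if_neg h.not_ge

end Atoms

section Development

variable [MeasurableSpace Ω] {P : Measure Ω} {D : ℕ → Finset (Set Ω)}

theorem measureReal_pos_of_mem [IsFiniteMeasure P] (hpos : ∀ n, ∀ A ∈ D n, 0 < P A) {n : ℕ}
    {A : Set Ω} (hA : A ∈ D n) : 0 < P.real A :=
  ENNReal.toReal_pos (hpos n A hA).ne' (measure_ne_top P A)

namespace IsPartitionSeq

theorem measurableSet (hD : IsPartitionSeq D) {n : ℕ} {A : Set Ω} (hA : A ∈ D n) :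
    MeasurableSet A :=
  hD.1 n A hA

theorem disjoint (hD : IsPartitionSeq D) {n : ℕ} {A B : Set Ω} (hA : A ∈ D n) (hB : B ∈ D n)
    (hAB : A ≠ B) : Disjoint A B :=
  hD.2.2.1 n hA hB hAB

theorem exists_mem (hD : IsPartitionSeq D) (n : ℕ) (w : Ω) : ∃ A ∈ D n, w ∈ A := by
  have hw : w ∈ ⋃ A ∈ D n, A := (hD.2.2.2.1 n).symm ▸ mem_univ w
  simpa using hw

theorem exists_superset (hD : IsPartitionSeq D) {n m : ℕ} (hnm : n ≤ m) {B : Set Ω}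
    (hB : B ∈ D m) : ∃ A ∈ D n, B ⊆ A := by
  induction m, hnm using Nat.le_induction generalizing B with
  | base => exact ⟨B, hB, subset_rfl⟩
  | succ m _ ih =>
    obtain ⟨C, hC, hBC⟩ := hD.2.2.2.2 m B hB
    obtain ⟨A, hA, hCA⟩ := ih hC
    exact ⟨A, hA, hBC.trans hCA⟩

theorem subset_or_disjoint (hD : IsPartitionSeq D) {n m : ℕ} (hnm : n ≤ m) {A B : Set Ω}
    (hB : B ∈ D m) (hA : A ∈ D n) : B ⊆ A ∨ Disjoint B A := by
  obtain ⟨A', hA', hBA'⟩ := hD.exists_superset hnm hB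
  by_cases h : A' = A
  · exact Or.inl (h ▸ hBA')
  · exact Or.inr ((hD.disjoint hA' hA h).mono_left hBA')

theorem exists_mem_subset (hD : IsPartitionSeq D) {n m : ℕ} (hnm : n ≤ m) {A : Set Ω}
    (hA : A ∈ D n) {w : Ω} (hw : w ∈ A) : ∃ B ∈ D m, w ∈ B ∧ B ⊆ A := by
  obtain ⟨B, hB, hwB⟩ := hD.exists_mem m w
  exact ⟨B, hB, hwB, (hD.subset_or_disjoint hnm hB hA).resolve_right
    fun h => disjoint_left.1 h hwB hw⟩

theorem subset_or_disjoint_of_measurableSet (hD : IsPartitionSeq D) {n : ℕ} {s : Set Ω}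
    (hs : MeasurableSet[atomSigma D n] s) {A : Set Ω} (hA : A ∈ D n) :
    A ⊆ s ∨ Disjoint A s := by
  induction hs with
  | basic t ht =>
    by_cases h : A = t
    · exact Or.inl h.subset
    · exact Or.inr (hD.disjoint hA ht h)
  | empty => exact Or.inr (disjoint_empty A)
  | compl t _ ih =>
    exact ih.symm.imp Disjoint.subset_compl_right disjoint_compl_right_iff_subset.2
  | iUnion t _ ih =>
    by_cases h : ∃ i, A ⊆ t i
    · obtain ⟨i, hi⟩ := h
      exact Or.inl (hi.trans (subset_iUnion t i))
    · exact Or.inr (disjoint_iUnion_right.2 fun i => (ih i).resolve_left (not_exists.1 h i))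

theorem atomSigma_le (hD : IsPartitionSeq D) (n : ℕ) : atomSigma D n ≤ ‹MeasurableSpace Ω› :=
  MeasurableSpace.generateFrom_le fun _ hA => hD.measurableSet hA

theorem atomSigma_mono (hD : IsPartitionSeq D) : Monotone (atomSigma D) := by
  classical
  intro n m hnm
  refine MeasurableSpace.generateFrom_le fun A hA => ?_
  have hA_eq : A = ⋃ B ∈ (D m).filter (· ⊆ A), B := by
    refine Subset.antisymm (fun w hw => ?_)
      (iUnion₂_subset fun B hB => (Finset.mem_filter.1 hB).2)
    obtain ⟨B, hB, hwB, hBA⟩ := hD.exists_mem_subset hnm hA hw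
    exact mem_biUnion (Finset.mem_filter.2 ⟨hB, hBA⟩) hwB
  rw [hA_eq]
  exact Finset.measurableSet_biUnion _
    fun B hB => MeasurableSpace.measurableSet_generateFrom (Finset.mem_filter.1 hB).1

def filtration (hD : IsPartitionSeq D) : Filtration ℕ ‹MeasurableSpace Ω› where
  seq := atomSigma D
  mono' := hD.atomSigma_mono
  le' := hD.atomSigma_le

theorem setIntegral_eq_sum_inter (hD : IsPartitionSeq D) {φ : Ω → ℝ} (hφ : Integrable φ P)
    (n : ℕ) {E : Set Ω} (hE : MeasurableSet E) :
    ∫ w in E, φ w ∂P = ∑ A ∈ D n, ∫ w in A ∩ E, φ w ∂P := by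
  have hcover : ⋃ A ∈ D n, A ∩ E = E := by rw [← iUnion₂_inter, hD.2.2.2.1 n, univ_inter]
  conv_lhs => rw [← hcover]
  exact integral_biUnion_finset _ (fun A hA => (hD.measurableSet hA).inter hE)
    (fun A hA B hB hAB => ((hD.disjoint hA hB hAB).mono inter_subset_left inter_subset_left))
    fun _ _ => hφ.integrableOn

end IsPartitionSeq

theorem mval_eq (hD : IsPartitionSeq D) (f : ℕ → Set Ω → ℝ) {n : ℕ} {A : Set Ω}
    (hA : A ∈ D n) {w : Ω} (hw : w ∈ A) : mval D f n w = f n A := by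
  rw [mval, Finset.sum_eq_single_of_mem A hA, indicator_of_mem hw]
  intro B hB hBA
  exact indicator_of_notMem (fun hwB => (hD.disjoint hB hA hBA).ne_of_mem hwB hw rfl) _

theorem lpNorm_congr {p : ℝ≥0∞} {f g : ℕ → Set Ω → ℝ} {n : ℕ} (h : f n = g n) :
    lpNorm P D p f n = lpNorm P D p g n := by
  rw [lpNorm, lpNorm, mval_congr h]

theorem integrable_mval [IsFiniteMeasure P] (hD : IsPartitionSeq D) (f : ℕ → Set Ω → ℝ)
    (n : ℕ) : Integrable (mval D f n) P :=
  integrable_finsetSum _ fun _ hA => (integrable_const _).indicator (hD.measurableSet hA)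

theorem setIntegral_mval [IsFiniteMeasure P] (hD : IsPartitionSeq D) (f : ℕ → Set Ω → ℝ)
    (n : ℕ) (E : Set Ω) :
    ∫ w in E, mval D f n w ∂P = ∑ A ∈ D n, f n A * P.real (A ∩ E) := by
  unfold mval
  rw [integral_finsetSum _ fun A hA => (integrable_const _).indicator (hD.measurableSet hA)]
  refine Finset.sum_congr rfl fun A hA => ?_
  rw [integral_indicator_const _ (hD.measurableSet hA), measureReal_restrict_apply
    (hD.measurableSet hA), smul_eq_mul, mul_comm]

theorem lpNorm_one_eq [IsFiniteMeasure P] (hD : IsPartitionSeq D) (f : ℕ → Set Ω → ℝ)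
    (n : ℕ) : lpNorm P D 1 f n = ENNReal.ofReal (∑ A ∈ D n, |f n A| * P.real A) := by
  have habs : (fun w => |mval D f n w|) = mval D (fun n A => |f n A|) n := by
    funext w
    obtain ⟨A, hA, hw⟩ := hD.exists_mem n w
    rw [mval_eq hD _ hA hw, mval_eq hD _ hA hw]
  rw [lpNorm, eLpNorm_one_eq_lintegral_enorm,
    ← ofReal_integral_norm_eq_lintegral_enorm (integrable_mval hD f n)]
  simp only [Real.norm_eq_abs, habs]
  rw [← setIntegral_univ, setIntegral_mval hD _ n univ]
  simp only [inter_univ]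

def IsMartFrom (P : Measure Ω) (D : ℕ → Finset (Set Ω)) (N : ℕ) (f : ℕ → Set Ω → ℝ) :
    Prop :=
  (∀ n, N ≤ n → ∀ A : Set Ω, A ∉ D n → f n A = 0) ∧
  ∀ n m : ℕ, N ≤ n → n ≤ m → ∀ A ∈ D n,
    ∫ w in A, mval D f n w ∂P = ∫ w in A, mval D f m w ∂P

theorem IsMart.isMartFrom {f : ℕ → Set Ω → ℝ} (hf : IsMart P D f) (N : ℕ) :
    IsMartFrom P D N f :=
  ⟨fun n _ => hf.1 n, fun n m _ => hf.2 n m⟩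

theorem IsMartFrom.setIntegral_eq [IsFiniteMeasure P] (hD : IsPartitionSeq D)
    {f : ℕ → Set Ω → ℝ} {N : ℕ} (hf : IsMartFrom P D N f) {n m : ℕ} (hNn : N ≤ n)
    (hnm : n ≤ m) {s : Set Ω} (hs : MeasurableSet[atomSigma D n] s) :
    ∫ w in s, mval D f n w ∂P = ∫ w in s, mval D f m w ∂P := by
  have hsm : MeasurableSet s := hD.atomSigma_le n s hs
  rw [hD.setIntegral_eq_sum_inter (integrable_mval hD f n) n hsm,
    hD.setIntegral_eq_sum_inter (integrable_mval hD f m) n hsm]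
  refine Finset.sum_congr rfl fun A hA => ?_
  rcases hD.subset_or_disjoint_of_measurableSet hs hA with h | h
  · rw [inter_eq_left.2 h]
    exact hf.2 n m hNn hnm A hA
  · simp [h.inter_eq]

theorem IsMart.submartingale [IsFiniteMeasure P] (hD : IsPartitionSeq D)
    {f : ℕ → Set Ω → ℝ} (hf : IsMart P D f) :
    Submartingale (fun n => mval D f n) hD.filtration P :=
  submartingale_of_setIntegral_le (fun n => stronglyMeasurable_mval f n)
    (fun n => integrable_mval hD f n)
    fun _ _ hij _ hs => ((hf.isMartFrom 0).setIntegral_eq hD (Nat.zero_le _) hij hs).le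

theorem IsMart.ae_exists_tendsto [IsFiniteMeasure P] (hD : IsPartitionSeq D)
    {f : ℕ → Set Ω → ℝ} (hf : IsMart P D f) (hbdd : martNorm P D 1 f ≠ ∞) :
    ∀ᵐ w ∂P, ∃ c, Tendsto (fun n => mval D f n w) atTop (𝓝 c) :=
  (hf.submartingale hD).exists_ae_tendsto_of_bdd (R := (martNorm P D 1 f).toNNReal) fun n => by
    rw [ENNReal.coe_toNNReal hbdd]
    exact le_iSup (lpNorm P D 1 f) n

theorem isMart_splice [IsFiniteMeasure P] (hD : IsPartitionSeq D) {f g : ℕ → Set Ω → ℝ}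
    {N : ℕ} (hf : IsMart P D f) (hg : IsMartFrom P D N g) (hN : g N = f N) :
    IsMart P D (splice f g N) := by
  refine ⟨fun n A hA => ?_, fun n m hnm A hA => ?_⟩
  · rcases le_or_gt n N with hn | hn
    · rw [splice_of_le hn]; exact hf.1 n A hA
    · rw [splice_of_lt hn]; exact hg.1 n hn.le A hA
  rcases le_or_gt m N with hm | hm
  · rw [mval_congr (splice_of_le (hnm.trans hm)), mval_congr (splice_of_le hm)]
    exact hf.2 n m hnm A hA
  rcases le_or_gt n N with hn | hn
  · have hAN : MeasurableSet[atomSigma D N] A :=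
      hD.atomSigma_mono hn _ (MeasurableSpace.measurableSet_generateFrom hA)
    calc ∫ w in A, mval D (splice f g N) n w ∂P = ∫ w in A, mval D f N w ∂P := by
          rw [mval_congr (splice_of_le hn)]; exact hf.2 n N hn A hA
      _ = ∫ w in A, mval D g m w ∂P := by
          rw [mval_congr hN.symm]; exact hg.setIntegral_eq hD le_rfl hm.le hAN
      _ = ∫ w in A, mval D (splice f g N) m w ∂P := by rw [mval_congr (splice_of_lt hm)]
  · rw [mval_congr (splice_of_lt hn), mval_congr (splice_of_lt hm)]
    exact hg.2 n m hn.le hnm A hA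

structure IsAtomChain (D : ℕ → Finset (Set Ω)) (N : ℕ) (A : Set Ω) (x : ℕ → Set Ω) :
    Prop where
  start : x N = A
  mem : ∀ n, N ≤ n → x n ∈ D n
  antitone : Antitone x

theorem IsAtomChain.measureReal_inter_div [IsFiniteMeasure P] (hD : IsPartitionSeq D)
    (hpos : ∀ n, ∀ A ∈ D n, 0 < P A) {N : ℕ} {A : Set Ω} {x : ℕ → Set Ω}
    (hx : IsAtomChain D N A x) {n m : ℕ} (hNn : N ≤ n) (hnm : n ≤ m) {E : Set Ω}
    (hE : E ∈ D n) : P.real (x m ∩ E) / P.real (x m) = if x n = E then 1 else 0 := by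
  split_ifs with h
  · rw [inter_eq_left.2 (h ▸ hx.antitone hnm), div_self]
    exact (measureReal_pos_of_mem hpos (hx.mem m (hNn.trans hnm))).ne'
  · rw [((hD.disjoint (hx.mem n hNn) hE h).mono_left (hx.antitone hnm)).inter_eq]
    simp

open Classical in
/-- After level `N`, the mass `f N A * P A` of each atom `A ∈ D N` is put on the atom `c A n`. -/
def pushMass (P : Measure Ω) (D : ℕ → Finset (Set Ω)) (f : ℕ → Set Ω → ℝ) (N : ℕ)
    (c : Set Ω → ℕ → Set Ω) : ℕ → Set Ω → ℝ :=
  fun n B => ∑ A ∈ D N, if B = c A n then f N A * P.real A / P.real (c A n) else 0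

section PushMass

variable {f : ℕ → Set Ω → ℝ} {N : ℕ} {c : Set Ω → ℕ → Set Ω}

theorem setIntegral_pushMass [IsFiniteMeasure P] (hD : IsPartitionSeq D)
    (hc : ∀ A ∈ D N, IsAtomChain D N A (c A)) {n : ℕ} (hn : N ≤ n) (E : Set Ω) :
    ∫ w in E, mval D (pushMass P D f N c) n w ∂P =
      ∑ A ∈ D N, f N A * P.real A * (P.real (c A n ∩ E) / P.real (c A n)) := by
  rw [setIntegral_mval hD _ n E]
  simp only [pushMass, Finset.sum_mul]
  rw [Finset.sum_comm]
  refine Finset.sum_congr rfl fun A hA => ?_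
  simp only [ite_mul, zero_mul]
  rw [Finset.sum_ite_eq' (D n) (c A n), if_pos ((hc A hA).mem n hn)]
  ring

theorem isMartFrom_pushMass [IsFiniteMeasure P] (hD : IsPartitionSeq D)
    (hpos : ∀ n, ∀ A ∈ D n, 0 < P A) (hc : ∀ A ∈ D N, IsAtomChain D N A (c A)) :
    IsMartFrom P D N (pushMass P D f N c) := by
  refine ⟨fun n hn B hB => Finset.sum_eq_zero fun A hA => if_neg ?_,
    fun n m hn hnm E hE => ?_⟩
  · rintro rfl
    exact hB ((hc A hA).mem n hn)
  rw [setIntegral_pushMass hD hc hn E, setIntegral_pushMass hD hc (hn.trans hnm) E]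
  refine Finset.sum_congr rfl fun A hA => ?_
  rw [(hc A hA).measureReal_inter_div hD hpos hn le_rfl hE,
    (hc A hA).measureReal_inter_div hD hpos hn hnm hE]

theorem pushMass_self [IsFiniteMeasure P] (hpos : ∀ n, ∀ A ∈ D n, 0 < P A)
    (hc : ∀ A ∈ D N, IsAtomChain D N A (c A)) (hf : ∀ B, B ∉ D N → f N B = 0) :
    pushMass P D f N c N = f N := by
  funext B
  have hstart : pushMass P D f N c N B =
      ∑ A ∈ D N, if B = A then f N A * P.real A / P.real A else 0 :=
    Finset.sum_congr rfl fun A hA => by rw [(hc A hA).start]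
  rw [hstart, Finset.sum_ite_eq]
  split_ifs with hB
  · exact mul_div_cancel_right₀ _ (measureReal_pos_of_mem hpos hB).ne'
  · exact (hf B hB).symm

theorem lpNorm_pushMass_le [IsFiniteMeasure P] (hD : IsPartitionSeq D)
    (hpos : ∀ n, ∀ A ∈ D n, 0 < P A) (hc : ∀ A ∈ D N, IsAtomChain D N A (c A)) {n : ℕ}
    (hn : N ≤ n) : lpNorm P D 1 (pushMass P D f N c) n ≤ lpNorm P D 1 f N := by
  rw [lpNorm_one_eq hD, lpNorm_one_eq hD]
  refine ENNReal.ofReal_le_ofReal ?_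
  calc ∑ B ∈ D n, |pushMass P D f N c n B| * P.real B
      ≤ ∑ B ∈ D n, ∑ A ∈ D N,
          (if B = c A n then |f N A * P.real A / P.real (c A n)| * P.real B else 0) := by
        refine Finset.sum_le_sum fun B _ => ?_
        simp only [← ite_zero_mul]
        rw [← Finset.sum_mul]
        refine mul_le_mul_of_nonneg_right ((Finset.abs_sum_le_sum_abs _ _).trans_eq ?_)
          measureReal_nonneg
        exact Finset.sum_congr rfl fun A _ => by split_ifs <;> simp
    _ = ∑ A ∈ D N, |f N A * P.real A / P.real (c A n)| * P.real (c A n) := by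
        rw [Finset.sum_comm]
        refine Finset.sum_congr rfl fun A hA => ?_
        rw [Finset.sum_ite_eq' (D n) (c A n), if_pos ((hc A hA).mem n hn)]
    _ = ∑ A ∈ D N, |f N A| * P.real A := by
        refine Finset.sum_congr rfl fun A hA => ?_
        have hcA := measureReal_pos_of_mem hpos ((hc A hA).mem n hn)
        rw [abs_div, abs_mul, abs_of_nonneg measureReal_nonneg, abs_of_pos hcA,
          div_mul_cancel₀ _ hcA.ne']

theorem setOf_le_abs_mval_pushMass_subset (hD : IsPartitionSeq D) {ε : ℝ} (hε : 0 < ε)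
    (n : ℕ) : {w | ε ≤ |mval D (pushMass P D f N c) n w|} ⊆ ⋃ A ∈ D N, c A n := by
  intro w hw
  by_contra hw'
  obtain ⟨B, hB, hwB⟩ := hD.exists_mem n w
  have hzero : pushMass P D f N c n B = 0 :=
    Finset.sum_eq_zero fun A hA =>
      if_neg fun (hBA : B = c A n) => hw' (mem_biUnion hA (hBA ▸ hwB))
  rw [mem_ofPred_eq, mval_eq hD _ hB hwB, hzero, abs_zero] at hw
  exact hε.not_ge hw

end PushMass

open Classical in
def nextAtom (P : Measure Ω) (D : ℕ → Finset (Set Ω)) (m : ℕ) (B : Set Ω) : Set Ω :=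
  if h : ((D (m + 1)).filter (· ⊆ B)).Nonempty then
    Classical.choose (Finset.exists_min_image _ (fun C => P C) h)
  else B

theorem nextAtom_spec (hD : IsPartitionSeq D) {m : ℕ} {B : Set Ω} (hB : B ∈ D m) :
    nextAtom P D m B ∈ D (m + 1) ∧ nextAtom P D m B ⊆ B ∧
      ∀ C ∈ D (m + 1), C ⊆ B → P (nextAtom P D m B) ≤ P C := by
  classical
  have hne : ((D (m + 1)).filter (· ⊆ B)).Nonempty := by
    obtain ⟨w, hw⟩ := hD.2.1 m B hB
    obtain ⟨C, hC, -, hCB⟩ := hD.exists_mem_subset (Nat.le_succ m) hB hw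
    exact ⟨C, Finset.mem_filter.2 ⟨hC, hCB⟩⟩
  rw [nextAtom, dif_pos hne]
  obtain ⟨hmem, hmin⟩ := Classical.choose_spec (Finset.exists_min_image _ (fun C => P C) hne)
  rw [Finset.mem_filter] at hmem
  exact ⟨hmem.1, hmem.2, fun C hC hCB => hmin C (Finset.mem_filter.2 ⟨hC, hCB⟩)⟩

theorem nextAtom_eq_or_le_half (hD : IsPartitionSeq D) {m : ℕ} {B : Set Ω} (hB : B ∈ D m) :
    nextAtom P D m B = B ∨ P (nextAtom P D m B) ≤ P B / 2 := by
  obtain ⟨hmem, hsub, hmin⟩ := nextAtom_spec (P := P) hD hB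
  refine or_iff_not_imp_left.2 fun hne => ?_
  obtain ⟨w, hwB, hw⟩ := exists_of_ssubset (hsub.ssubset_of_ne hne)
  obtain ⟨C, hC, hwC, hCB⟩ := hD.exists_mem_subset (Nat.le_succ m) hB hwB
  have hdisj : Disjoint (nextAtom P D m B) C :=
    hD.disjoint hmem hC fun h => hw (h ▸ hwC)
  rw [ENNReal.le_div_iff_mul_le (Or.inl two_ne_zero) (Or.inl ENNReal.ofNat_ne_top), mul_two]
  calc P (nextAtom P D m B) + P (nextAtom P D m B) ≤ P (nextAtom P D m B) + P C :=
        add_le_add le_rfl (hmin C hC hCB)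
    _ = P (nextAtom P D m B ∪ C) := (measure_union hdisj (hD.measurableSet hC)).symm
    _ ≤ P B := measure_mono (union_subset hsub hCB)

def descChain (P : Measure Ω) (D : ℕ → Finset (Set Ω)) (N : ℕ) (A : Set Ω) : ℕ → Set Ω
  | 0 => A
  | m + 1 => if m < N then A else nextAtom P D m (descChain P D N A m)

theorem descChain_of_le {N m : ℕ} {A : Set Ω} (hm : m ≤ N) : descChain P D N A m = A := by
  cases m with
  | zero => rfl
  | succ m => exact if_pos hm

theorem descChain_succ {N m : ℕ} {A : Set Ω} (hm : N ≤ m) :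
    descChain P D N A (m + 1) = nextAtom P D m (descChain P D N A m) :=
  if_neg hm.not_gt

theorem isAtomChain_descChain (hD : IsPartitionSeq D) {N : ℕ} {A : Set Ω} (hA : A ∈ D N) :
    IsAtomChain D N A (descChain P D N A) := by
  have hmem : ∀ n, N ≤ n → descChain P D N A n ∈ D n := by
    intro n hn
    induction n, hn using Nat.le_induction with
    | base => rwa [descChain_of_le le_rfl]
    | succ n hn ih => rw [descChain_succ hn]; exact (nextAtom_spec hD ih).1
  refine ⟨descChain_of_le le_rfl, hmem, antitone_nat_of_succ_le fun m => ?_⟩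
  rcases lt_or_ge m N with hm | hm
  · rw [descChain_of_le hm, descChain_of_le hm.le]
  · rw [descChain_succ hm]
    exact (nextAtom_spec hD (hmem m hm)).2.1

theorem exists_lt_measure_descChain_le_half (hD : IsPartitionSeq D) (hAs : AssumptionA P D)
    {N : ℕ} {A : Set Ω} (hA : A ∈ D N) {m : ℕ} (hm : N ≤ m) :
    ∃ m' > m, P (descChain P D N A m') ≤ P (descChain P D N A m) / 2 := by
  have hx := isAtomChain_descChain (P := P) hD hA
  obtain ⟨m'', hmm'', hnot⟩ := hAs.2 m _ (hx.mem m hm)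
  have hstep : ∃ j, m ≤ j ∧ descChain P D N A (j + 1) ≠ descChain P D N A j := by
    by_contra! hconst
    have : ∀ l, m ≤ l → descChain P D N A l = descChain P D N A m := by
      intro l hl
      induction l, hl using Nat.le_induction with
      | base => rfl
      | succ l hl ih => rw [hconst l hl, ih]
    exact hnot (this m'' hmm''.le ▸ hx.mem m'' (hm.trans hmm''.le))
  obtain ⟨j, hmj, hj⟩ := hstep
  have hhalf := nextAtom_eq_or_le_half (P := P) hD (hx.mem j (hm.trans hmj))
  rw [← descChain_succ (hm.trans hmj)] at hhalf
  refine ⟨j + 1, Nat.lt_succ_of_le hmj, ?_⟩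
  exact (hhalf.resolve_left hj).trans
    (ENNReal.div_le_div_right (measure_mono (hx.antitone hmj)) 2)

theorem tendsto_measure_descChain [IsFiniteMeasure P] (hD : IsPartitionSeq D)
    (hAs : AssumptionA P D) {N : ℕ} {A : Set Ω} (hA : A ∈ D N) :
    Tendsto (fun m => P (descChain P D N A m)) atTop (𝓝 0) := by
  have hpow : ∀ i : ℕ, ∃ M, N ≤ M ∧ P (descChain P D N A M) ≤ P A * 2⁻¹ ^ i := by
    intro i
    induction i with
    | zero => exact ⟨N, le_rfl, by rw [descChain_of_le le_rfl, pow_zero, mul_one]⟩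
    | succ i ih =>
      obtain ⟨M, hNM, hM⟩ := ih
      obtain ⟨M', hMM', hM'⟩ := exists_lt_measure_descChain_le_half hD hAs hA hNM
      refine ⟨M', hNM.trans hMM'.le, hM'.trans ?_⟩
      rw [pow_succ, ← mul_assoc, ← div_eq_mul_inv]
      exact ENNReal.div_le_div_right hM 2
  have hgeom : Tendsto (fun i : ℕ => P A * 2⁻¹ ^ i) atTop (𝓝 0) := by
    simpa using ENNReal.Tendsto.const_mul
      (ENNReal.tendsto_pow_atTop_nhds_zero_of_lt_one (by norm_num)) (Or.inr (measure_ne_top P A))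
  refine ENNReal.tendsto_nhds_zero.2 fun ε hε => ?_
  obtain ⟨i, hi⟩ := (hgeom.eventually (Iic_mem_nhds hε)).exists
  obtain ⟨M, -, hM⟩ := hpow i
  exact eventually_atTop.2 ⟨M, fun m hm =>
    (measure_mono ((isAtomChain_descChain hD hA).antitone hm)).trans (hM.trans hi)⟩

theorem continuous_apply_atom [IsFiniteMeasure P] (hD : IsPartitionSeq D) {n : ℕ}
    {A : Set Ω} (hA : A ∈ D n) (hPA : 0 < P A) :
    Continuous fun h : MartBall P D 1 => h.1 n A := by
  have hPA' : 0 < P.real A := ENNReal.toReal_pos hPA.ne' (measure_ne_top P A)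
  refine continuous_iff_continuousAt.2 fun g => Metric.tendsto_nhds.2 fun ε hε => ?_
  have hball : {h : MartBall P D 1 | lpNorm P D 1 (fun j B => h.1 j B - g.1 j B) n <
      ENNReal.ofReal (ε * P.real A)} ∈ 𝓝 g := by
    refine IsOpen.mem_nhds (TopologicalSpace.isOpen_generateFrom_of_mem
      ⟨g, n, _, ENNReal.ofReal_pos.2 (by positivity), rfl⟩) ?_
    simp [lpNorm_one_eq hD, hε, hPA']
  filter_upwards [hball] with h hh
  rw [lpNorm_one_eq hD, ENNReal.ofReal_lt_ofReal_iff (by positivity)] at hh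
  have hle := Finset.single_le_sum (f := fun B => |h.1 n B - g.1 n B| * P.real B)
    (fun B _ => mul_nonneg (abs_nonneg _) measureReal_nonneg) hA
  rw [Real.dist_eq]
  exact lt_of_mul_lt_mul_right (hle.trans_lt hh) hPA'.le

def smallAfter (P : Measure Ω) (D : ℕ → Finset (Set Ω)) (k : ℕ) (ε : ℝ) :
    Set (MartBall P D 1) :=
  {h | ∃ m, k ≤ m ∧ P {w | ε ≤ |mval D h.1 m w|} < ENNReal.ofReal ε}

theorem isOpen_smallAfter [IsFiniteMeasure P] (hD : IsPartitionSeq D)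
    (hpos : ∀ n, ∀ A ∈ D n, 0 < P A) (k : ℕ) (ε : ℝ) : IsOpen (smallAfter P D k ε) := by
  rw [isOpen_iff_forall_mem_open]
  rintro g ⟨m, hkm, hg⟩
  refine ⟨⋂ A ∈ (D m).filter (fun A => |g.1 m A| < ε), {h | |h.1 m A| < ε}, ?_, ?_, ?_⟩
  · intro h hh
    refine ⟨m, hkm, (measure_mono fun w hw => ?_).trans_lt hg⟩
    obtain ⟨A, hA, hwA⟩ := hD.exists_mem m w
    rw [mem_ofPred_eq, mval_eq hD _ hA hwA] at hw ⊢
    by_contra! hlt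
    exact (mem_iInter₂.1 hh A (Finset.mem_filter.2 ⟨hA, hlt⟩)).not_ge hw
  · exact isOpen_biInter_finset fun A hA => isOpen_lt
      (continuous_abs.comp (continuous_apply_atom hD (Finset.mem_filter.1 hA).1
        (hpos m A (Finset.mem_filter.1 hA).1))) continuous_const
  · exact mem_iInter₂.2 fun A hA => (Finset.mem_filter.1 hA).2

theorem exists_mem_smallAfter_eq_of_le [IsFiniteMeasure P] (hD : IsPartitionSeq D)
    (hAs : AssumptionA P D) (g : MartBall P D 1) (N k : ℕ) {ε : ℝ} (hε : 0 < ε) :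
    ∃ h ∈ smallAfter P D k ε, ∀ n ≤ N, h.1 n = g.1 n := by
  set c := descChain P D N
  have hc : ∀ A ∈ D N, IsAtomChain D N A (c A) := fun A hA => isAtomChain_descChain hD hA
  have hsum : Tendsto (fun m => ∑ A ∈ D N, P (c A m)) atTop (𝓝 0) := by
    simpa using tendsto_finsetSum (D N) fun A hA => tendsto_measure_descChain hD hAs hA
  obtain ⟨M, hM, hkM, hNM⟩ := ((hsum.eventually (gt_mem_nhds (ENNReal.ofReal_pos.2 hε))).and
    ((eventually_ge_atTop k).and (eventually_gt_atTop N))).exists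
  set F := splice g.1 (pushMass P D g.1 N c) N
  have hF : IsMart P D F :=
    isMart_splice hD g.2.1 (isMartFrom_pushMass hD hAs.1 hc) (pushMass_self hAs.1 hc (g.2.1.1 N))
  have hnorm : martNorm P D 1 F ≤ 1 := iSup_le fun n => by
    rcases le_or_gt n N with hn | hn
    · rw [lpNorm_congr (splice_of_le hn)]
      exact (le_iSup _ n).trans g.2.2
    · rw [lpNorm_congr (splice_of_lt hn)]
      exact (lpNorm_pushMass_le hD hAs.1 hc hn.le).trans ((le_iSup _ N).trans g.2.2)
  refine ⟨⟨F, hF, hnorm⟩, ⟨M, hkM, ?_⟩, fun n hn => splice_of_le hn⟩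
  calc P {w | ε ≤ |mval D F M w|} ≤ P (⋃ A ∈ D N, c A M) := by
        rw [mval_congr (splice_of_lt hNM)]
        exact measure_mono (setOf_le_abs_mval_pushMass_subset hD hε M)
    _ ≤ ∑ A ∈ D N, P (c A M) := measure_biUnion_finset_le _ _
    _ < ENNReal.ofReal ε := hM

theorem dense_smallAfter [IsFiniteMeasure P] (hD : IsPartitionSeq D) (hAs : AssumptionA P D)
    (k : ℕ) {ε : ℝ} (hε : 0 < ε) : Dense (smallAfter P D k ε) := by
  intro g
  choose h hmem heq using fun N => exists_mem_smallAfter_eq_of_le hD hAs g N k hε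
  refine mem_closure_of_tendsto (TopologicalSpace.tendsto_nhds_generateFrom_iff.2 ?_)
    (Eventually.of_forall (f := atTop) hmem)
  rintro s ⟨f, n, δ, -, rfl⟩ hg
  filter_upwards [eventually_ge_atTop n] with N hN
  show lpNorm P D 1 (fun j A => (h N).1 j A - f.1 j A) n < δ
  rwa [lpNorm_congr (g := fun j A => g.1 j A - f.1 j A) (by simp only [heq N n hN])]

theorem aeTendsto0_of_forall_mem_smallAfter [IsFiniteMeasure P] (hD : IsPartitionSeq D)
    {f : MartBall P D 1} (hf : ∀ k : ℕ, f ∈ smallAfter P D k (1 / (k + 1))) :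
    AETendsto0 P D f.1 := by
  choose m hkm hsmall using hf
  have hmeas : TendstoInMeasure P (fun k => mval D f.1 (m k)) atTop 0 := by
    refine tendstoInMeasure_iff_dist.2 fun ε hε => ?_
    simp only [Pi.zero_apply, dist_zero_right, Real.norm_eq_abs]
    have hlt : ∀ᶠ k : ℕ in atTop, 1 / ((k : ℝ) + 1) < ε :=
      tendsto_one_div_add_atTop_nhds_zero_nat.eventually (gt_mem_nhds hε)
    refine tendsto_of_tendsto_of_tendsto_of_le_of_le' tendsto_const_nhds
      (by rw [← ENNReal.ofReal_zero]
          exact ENNReal.tendsto_ofReal tendsto_one_div_add_atTop_nhds_zero_nat)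
      (Eventually.of_forall fun _ => zero_le) ?_
    filter_upwards [hlt] with k hk
    exact (measure_mono fun w hw => hk.le.trans hw).trans (hsmall k).le
  obtain ⟨ns, hns, hae⟩ := hmeas.exists_seq_tendsto_ae
  filter_upwards [hae, f.2.1.ae_exists_tendsto hD (ne_top_of_le_ne_top ENNReal.one_ne_top f.2.2)]
    with w hw0 ⟨c, hc⟩
  have hm : Tendsto (fun i => m (ns i)) atTop atTop :=
    tendsto_atTop_mono (fun i => (hns.id_le i).trans (hkm (ns i))) tendsto_id
  rwa [tendsto_nhds_unique (hc.comp hm) hw0] at hc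

end Development

/-- Proposition (p:residual): the set `M_{1,1} ∩ M₁ˢ` of martingales of norm at most one
converging to `0` `P`-almost surely is comeager in `M_{1,1}` (with the topology of
pointwise convergence). -/
theorem statement8 [MeasurableSpace Ω] (P : Measure Ω) [IsProbabilityMeasure P]
    (D : ℕ → Finset (Set Ω)) (hpart : IsPartitionSeq D) (hA : AssumptionA P D) :
    {f : MartBall P D 1 | AETendsto0 P D f.1} ∈ residual (MartBall P D 1) := by
  have hU : ∀ k : ℕ, smallAfter P D k (1 / (k + 1)) ∈ residual (MartBall P D 1) := fun k =>
    residual_of_dense_open (isOpen_smallAfter hpart hA.1 k _)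
      (dense_smallAfter hpart hA k Nat.one_div_pos_of_nat)
  exact mem_of_superset (countable_iInter_mem.2 hU)
    fun f hf => aeTendsto0_of_forall_mem_smallAfter hpart (mem_iInter.1 hf)

end MartingalePaper
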